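/- arXiv:1801.01380 — 4 statements merged into one kernel-verified Lean document; each statement's English description precedes it below -/
import Mathlib

section
/- Let ν ≥ 1/2, j > ν, and let L : [0,1) → ℝ be a C² solution of L''(z) + (j² - (ν² - 1/4)/(1-z)²)·L(z) = 0 with L(0) = 0 and L'(0) = j. Then for every a ∈ (0,1) and all z ∈ [0, 1-a], one has |L(z)| ≤ exp((ν² - 1/4)/ν · (1-a)/a). -/
/-!
The energy `E = L² + (L'/j)²` satisfies `E' = 2 q L L' / j² ≤ (q / j) E` for the potential
`q z = (ν² - 1/4)/(1 - z)² ≥ 0`, by AM-GM. Grönwall's inequality with the primitive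
`(ν² - 1/4)/(1 - z)` of `q` and `E 0 = 1` then give
`L(z)² ≤ E(z) ≤ exp ((ν² - 1/4)/j · z/(1 - z))`, and `j > ν`, `z ≤ 1 - a` bound the exponent.
-/

open Set Real

theorem le_mul_exp_sub_of_hasDerivAt_le_mul {f f' φ φ' : ℝ → ℝ} {a b : ℝ} (hab : a ≤ b)
    (hf : ∀ x ∈ Icc a b, HasDerivAt f (f' x) x) (hφ : ∀ x ∈ Icc a b, HasDerivAt φ (φ' x) x)
    (hle : ∀ x ∈ Icc a b, f' x ≤ φ' x * f x) :
    f b ≤ f a * exp (φ b - φ a) := by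
  have hG : ∀ x ∈ Icc a b, HasDerivAt (fun y ↦ f y * exp (-φ y))
      (f' x * exp (-φ x) + f x * (exp (-φ x) * -φ' x)) x :=
    fun x hx ↦ (hf x hx).mul (hφ x hx).neg.exp
  have hanti : AntitoneOn (fun y ↦ f y * exp (-φ y)) (Icc a b) := by
    refine antitoneOn_of_hasDerivWithinAt_nonpos (convex_Icc a b)
      (fun x hx ↦ (hG x hx).continuousAt.continuousWithinAt)
      (fun x hx ↦ (hG x (interior_subset hx)).hasDerivWithinAt) fun x hx ↦ ?_
    calc f' x * exp (-φ x) + f x * (exp (-φ x) * -φ' x) = (f' x - φ' x * f x) * exp (-φ x) := by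
          ring
      _ ≤ 0 := mul_nonpos_of_nonpos_of_nonneg (sub_nonpos.2 (hle x (interior_subset hx)))
          (exp_nonneg _)
  have hba := hanti (left_mem_Icc.2 hab) (right_mem_Icc.2 hab) hab
  calc f b = f b * exp (-φ b) * exp (φ b) := by rw [mul_assoc, ← exp_add]; simp
    _ ≤ f a * exp (-φ a) * exp (φ b) := by gcongr
    _ = f a * exp (φ b - φ a) := by rw [mul_assoc, ← exp_add]; ring_nf

theorem energy_deriv_le_of_ode {j q l l' l'' : ℝ} (hj : 0 < j) (hq : 0 ≤ q)
    (hode : l'' + (j ^ 2 - q) * l = 0) :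
    2 * l * l' + 2 * (l' / j) * (l'' / j) ≤ q / j * (l ^ 2 + (l' / j) ^ 2) := by
  have hgap : q / j * (l ^ 2 + (l' / j) ^ 2) - (2 * l * l' + 2 * (l' / j) * (l'' / j))
      = q / j * (l - l' / j) ^ 2 := by
    rw [show l'' = (q - j ^ 2) * l by linarith]
    field_simp
    ring
  have : 0 ≤ q / j * (l - l' / j) ^ 2 := by positivity
  linarith

theorem sq_add_div_sq_le_exp_of_ode {j : ℝ} (hj : 0 < j) {L L' L'' q Q : ℝ → ℝ} {a b : ℝ}
    (hab : a ≤ b) (hL' : ∀ x ∈ Icc a b, HasDerivAt L (L' x) x)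
    (hL'' : ∀ x ∈ Icc a b, HasDerivAt L' (L'' x) x) (hQ : ∀ x ∈ Icc a b, HasDerivAt Q (q x) x)
    (hq : ∀ x ∈ Icc a b, 0 ≤ q x) (hode : ∀ x ∈ Icc a b, L'' x + (j ^ 2 - q x) * L x = 0) :
    L b ^ 2 + (L' b / j) ^ 2 ≤ (L a ^ 2 + (L' a / j) ^ 2) * exp (Q b / j - Q a / j) := by
  refine le_mul_exp_sub_of_hasDerivAt_le_mul hab (fun x hx ↦ ?_)
    (fun x hx ↦ (hQ x hx).div_const j) fun x hx ↦ energy_deriv_le_of_ode hj (hq x hx) (hode x hx)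
  exact (((hL' x hx).fun_pow 2).add (((hL'' x hx).div_const j).fun_pow 2)).congr_deriv (by ring)

theorem hasDerivAt_div_one_sub (C : ℝ) {x : ℝ} (hx : x ≠ 1) :
    HasDerivAt (fun y ↦ C / (1 - y)) (C / (1 - x) ^ 2) x := by
  refine ((hasDerivAt_const x C).fun_div ((hasDerivAt_id x).const_sub 1) ?_).congr_deriv ?_
  · exact sub_ne_zero.2 (Ne.symm hx)
  · simp

theorem rescaled_bessel_uniform_bound (ν j : ℝ) (hν : 1 / 2 ≤ ν) (hj : ν < j)
    (L L' L'' : ℝ → ℝ)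
    (hL' : ∀ z ∈ Set.Ico (0:ℝ) 1, HasDerivAt L (L' z) z)
    (hL'' : ∀ z ∈ Set.Ico (0:ℝ) 1, HasDerivAt L' (L'' z) z)
    (hODE : ∀ z ∈ Set.Ico (0:ℝ) 1,
      L'' z + (j ^ 2 - (ν ^ 2 - 1 / 4) / (1 - z) ^ 2) * L z = 0)
    (hL0 : L 0 = 0) (hL'0 : L' 0 = j) :
    ∀ a ∈ Set.Ioo (0:ℝ) 1, ∀ z ∈ Set.Icc (0:ℝ) (1 - a),
      |L z| ≤ Real.exp ((ν ^ 2 - 1 / 4) / ν * ((1 - a) / a)) := by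
  rintro a ⟨ha0, ha1⟩ z ⟨hz0, hza⟩
  have hν0 : 0 < ν := by linarith
  have hC : 0 ≤ ν ^ 2 - 1 / 4 := by nlinarith
  set C := ν ^ 2 - 1 / 4
  have hsub : Icc 0 z ⊆ Ico 0 1 := Icc_subset_Ico_right (by linarith)
  have henergy := sq_add_div_sq_le_exp_of_ode (hν0.trans hj) hz0 (fun x hx ↦ hL' x (hsub hx))
    (fun x hx ↦ hL'' x (hsub hx)) (fun x hx ↦ hasDerivAt_div_one_sub C (hsub hx).2.ne)
    (fun _ _ ↦ by positivity) fun x hx ↦ hODE x (hsub hx)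
  rw [hL0, hL'0, div_self (hν0.trans hj).ne', sub_zero, div_one] at henergy
  norm_num at henergy
  set B := C / ν * ((1 - a) / a) with hB_def
  have hexponent : C / (1 - z) / j - C / j ≤ B :=
    calc C / (1 - z) / j - C / j = (C / (1 - z) - C) / j := by ring
      _ ≤ (C / a - C) / j := by gcongr <;> linarith
      _ ≤ (C / a - C) / ν := by
        gcongr
        exact sub_nonneg.2 (le_div_self hC ha0 ha1.le)
      _ = B := by rw [hB_def]; field_simp
  have hB : 0 ≤ B := by
    have : 0 ≤ 1 - a := by linarith
    positivity
  refine abs_le_of_sq_le_sq ?_ (exp_nonneg _)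
  calc L z ^ 2 ≤ L z ^ 2 + (L' z / j) ^ 2 := le_add_of_nonneg_right (sq_nonneg _)
    _ ≤ exp (C / (1 - z) / j - C / j) := henergy
    _ ≤ exp B := exp_le_exp.2 hexponent
    _ ≤ exp B ^ 2 := le_self_pow₀ (one_le_exp hB) two_ne_zero
end

section
/- Let f, g : [a,b] → ℝ be continuous with f(x) < g(x) for all x ∈ [a,b], let u, v be C² functions on [a,b] satisfying u'' + f·u = 0 and v'' + g·v = 0, and assume a and b are two consecutive zeros of u with u not identically zero. Then v has at least one zero in the open interval (a,b). -/
/-!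
Suppose `v` has no zero in `(a, b)`. After changing signs, `u > 0` and `v > 0` on `(a, b)`.
The Wronskian `W = u' v - u v'` then satisfies `W' = (g - f) u v > 0`, so `W a < W b`.
But `u a = u b = 0` gives `W a = u'(a) v(a) ≥ 0` and `W b = u'(b) v(b) ≤ 0`,
since `u` leaves `0` upwards at `a` and returns to it at `b`.
-/

open Set

structure IsSolutionOn (f u u' u'' : ℝ → ℝ) (s : Set ℝ) : Prop where
  hasDerivWithinAt : ∀ x ∈ s, HasDerivWithinAt u (u' x) s x
  hasDerivWithinAt_deriv : ∀ x ∈ s, HasDerivWithinAt u' (u'' x) s x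
  ode : ∀ x ∈ s, u'' x + f x * u x = 0

namespace IsSolutionOn

variable {f g u u' u'' v v' v'' : ℝ → ℝ} {s : Set ℝ}

theorem continuousOn (hu : IsSolutionOn f u u' u'' s) : ContinuousOn u s :=
  fun x hx => (hu.hasDerivWithinAt x hx).continuousWithinAt

theorem const_mul (hu : IsSolutionOn f u u' u'' s) (c : ℝ) :
    IsSolutionOn f (fun x => c * u x) (fun x => c * u' x) (fun x => c * u'' x) s where
  hasDerivWithinAt x hx := (hu.hasDerivWithinAt x hx).const_mul c
  hasDerivWithinAt_deriv x hx := (hu.hasDerivWithinAt_deriv x hx).const_mul c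
  ode x hx := by linear_combination c * hu.ode x hx

theorem hasDerivWithinAt_wronskian (hu : IsSolutionOn f u u' u'' s)
    (hv : IsSolutionOn g v v' v'' s) {x : ℝ} (hx : x ∈ s) :
    HasDerivWithinAt (fun y => u' y * v y - u y * v' y) ((g x - f x) * u x * v x) s x := by
  refine (((hu.hasDerivWithinAt_deriv x hx).mul (hv.hasDerivWithinAt x hx)).sub
    ((hu.hasDerivWithinAt x hx).mul (hv.hasDerivWithinAt_deriv x hx))).congr_deriv ?_
  linear_combination v x * hu.ode x hx - u x * hv.ode x hx

end IsSolutionOn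

theorem IsPreconnected.exists_mul_pos_of_ne_zero {s : Set ℝ} (hs : IsPreconnected s)
    {φ : ℝ → ℝ} (hφ : ContinuousOn φ s) (hφ0 : ∀ x ∈ s, φ x ≠ 0) :
    ∃ c : ℝ, ∀ x ∈ s, 0 < c * φ x := by
  rcases hs.mapsTo_Ioi_or_Iio hφ hφ0 with hpos | hneg
  · exact ⟨1, fun x hx => by simpa using hpos hx⟩
  · exact ⟨-1, fun x hx => by simpa using hneg hx⟩

theorem nonneg_on_Icc_of_pos_on_Ioo {a b : ℝ} (hab : a < b) {φ : ℝ → ℝ}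
    (hφ : ContinuousOn φ (Icc a b)) (hpos : ∀ x ∈ Ioo a b, 0 < φ x) :
    ∀ x ∈ Icc a b, 0 ≤ φ x := fun x hx =>
  ContinuousWithinAt.closure_le (by rwa [closure_Ioo hab.ne]) continuousWithinAt_const
    ((hφ x hx).mono Ioo_subset_Icc_self) fun y hy => (hpos y hy).le

theorem IsMinOn.hasDerivWithinAt_Icc_left_nonneg {a b d : ℝ} (hab : a < b) {φ : ℝ → ℝ}
    (hmin : IsMinOn φ (Icc a b) a) (hd : HasDerivWithinAt φ d (Icc a b) a) : 0 ≤ d := by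
  have hcone : b - a ∈ posTangentConeAt (Icc a b) a :=
    sub_mem_posTangentConeAt_of_segment_subset (segment_eq_Icc hab.le).subset
  have := hmin.localize.hasFDerivWithinAt_nonneg hd hcone
  rw [ContinuousLinearMap.toSpanSingleton_apply, smul_eq_mul] at this
  exact nonneg_of_mul_nonneg_right this (sub_pos.2 hab)

theorem IsMinOn.hasDerivWithinAt_Icc_right_nonpos {a b d : ℝ} (hab : a < b) {φ : ℝ → ℝ}
    (hmin : IsMinOn φ (Icc a b) b) (hd : HasDerivWithinAt φ d (Icc a b) b) : d ≤ 0 := by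
  have hcone : a - b ∈ posTangentConeAt (Icc a b) b :=
    sub_mem_posTangentConeAt_of_segment_subset (by rw [segment_symm, segment_eq_Icc hab.le])
  have := hmin.localize.hasFDerivWithinAt_nonneg hd hcone
  rw [ContinuousLinearMap.toSpanSingleton_apply, smul_eq_mul] at this
  exact nonpos_of_mul_nonneg_right this (sub_neg.2 hab)

section Comparison

variable {a b : ℝ} {f g u u' u'' v v' v'' : ℝ → ℝ}

theorem strictMonoOn_wronskian (hfg : ∀ x ∈ Ioo a b, f x < g x)
    (hu : IsSolutionOn f u u' u'' (Icc a b)) (hv : IsSolutionOn g v v' v'' (Icc a b))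
    (hupos : ∀ x ∈ Ioo a b, 0 < u x) (hvpos : ∀ x ∈ Ioo a b, 0 < v x) :
    StrictMonoOn (fun y => u' y * v y - u y * v' y) (Icc a b) := by
  refine strictMonoOn_of_hasDerivWithinAt_pos (f' := fun x => (g x - f x) * u x * v x)
    (convex_Icc a b)
    (fun x hx => (hu.hasDerivWithinAt_wronskian hv hx).continuousWithinAt) (fun x hx => ?_)
    (fun x hx => ?_)
  · rw [interior_Icc] at hx ⊢
    exact (hu.hasDerivWithinAt_wronskian hv (Ioo_subset_Icc_self hx)).mono Ioo_subset_Icc_self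
  · rw [interior_Icc] at hx
    exact mul_pos (mul_pos (sub_pos.2 (hfg x hx)) (hupos x hx)) (hvpos x hx)

theorem sturm_comparison_of_pos (hab : a < b) (hfg : ∀ x ∈ Ioo a b, f x < g x)
    (hu : IsSolutionOn f u u' u'' (Icc a b)) (hv : IsSolutionOn g v v' v'' (Icc a b))
    (hua : u a = 0) (hub : u b = 0) (hupos : ∀ x ∈ Ioo a b, 0 < u x) :
    ∃ x ∈ Ioo a b, v x ≤ 0 := by
  by_contra! hvpos
  have ha : a ∈ Icc a b := left_mem_Icc.2 hab.le
  have hb : b ∈ Icc a b := right_mem_Icc.2 hab.le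
  have hu0 := nonneg_on_Icc_of_pos_on_Ioo hab hu.continuousOn hupos
  have hv0 := nonneg_on_Icc_of_pos_on_Ioo hab hv.continuousOn hvpos
  have hu'a : 0 ≤ u' a := IsMinOn.hasDerivWithinAt_Icc_left_nonneg hab
    (fun x hx => by simpa [hua] using hu0 x hx) (hu.hasDerivWithinAt a ha)
  have hu'b : u' b ≤ 0 := IsMinOn.hasDerivWithinAt_Icc_right_nonpos hab
    (fun x hx => by simpa [hub] using hu0 x hx) (hu.hasDerivWithinAt b hb)
  have hWa : 0 ≤ u' a * v a - u a * v' a := by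
    rw [hua, zero_mul, sub_zero]
    exact mul_nonneg hu'a (hv0 a ha)
  have hWb : u' b * v b - u b * v' b ≤ 0 := by
    rw [hub, zero_mul, sub_zero]
    exact mul_nonpos_of_nonpos_of_nonneg hu'b (hv0 b hb)
  exact (strictMonoOn_wronskian hfg hu hv hupos hvpos ha hb hab).not_ge (hWb.trans hWa)

end Comparison

theorem sturm_comparison_general (a b : ℝ) (hab : a < b) (f g : ℝ → ℝ)
    (hfg : ∀ x ∈ Set.Icc a b, f x < g x)
    (u u' u'' v v' v'' : ℝ → ℝ)
    (hu' : ∀ x ∈ Set.Icc a b, HasDerivWithinAt u (u' x) (Set.Icc a b) x)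
    (hu'' : ∀ x ∈ Set.Icc a b, HasDerivWithinAt u' (u'' x) (Set.Icc a b) x)
    (hv' : ∀ x ∈ Set.Icc a b, HasDerivWithinAt v (v' x) (Set.Icc a b) x)
    (hv'' : ∀ x ∈ Set.Icc a b, HasDerivWithinAt v' (v'' x) (Set.Icc a b) x)
    (huODE : ∀ x ∈ Set.Icc a b, u'' x + f x * u x = 0)
    (hvODE : ∀ x ∈ Set.Icc a b, v'' x + g x * v x = 0)
    (hua : u a = 0) (hub : u b = 0)
    (hconsec : ∀ x ∈ Set.Ioo a b, u x ≠ 0) :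
    ∃ x ∈ Set.Ioo a b, v x = 0 := by
  by_contra! hv0
  have hu : IsSolutionOn f u u' u'' (Icc a b) := ⟨hu', hu'', huODE⟩
  have hv : IsSolutionOn g v v' v'' (Icc a b) := ⟨hv', hv'', hvODE⟩
  obtain ⟨c, hc⟩ := isPreconnected_Ioo.exists_mul_pos_of_ne_zero
    (hu.continuousOn.mono Ioo_subset_Icc_self) hconsec
  obtain ⟨d, hd⟩ := isPreconnected_Ioo.exists_mul_pos_of_ne_zero
    (hv.continuousOn.mono Ioo_subset_Icc_self) hv0
  obtain ⟨x, hx, hdvx⟩ := sturm_comparison_of_pos hab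
    (fun x hx => hfg x (Ioo_subset_Icc_self hx)) (hu.const_mul c) (hv.const_mul d)
    (by simp [hua]) (by simp [hub]) hc
  exact (hd x hx).not_ge hdvx

theorem sturm_comparison (a b : ℝ) (hab : a < b) (f g : ℝ → ℝ)
    (hf : ContinuousOn f (Set.Icc a b)) (hg : ContinuousOn g (Set.Icc a b))
    (hfg : ∀ x ∈ Set.Icc a b, f x < g x)
    (u u' u'' v v' v'' : ℝ → ℝ)
    (hu' : ∀ x ∈ Set.Icc a b, HasDerivWithinAt u (u' x) (Set.Icc a b) x)
    (hu'' : ∀ x ∈ Set.Icc a b, HasDerivWithinAt u' (u'' x) (Set.Icc a b) x)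
    (hu''cont : ContinuousOn u'' (Set.Icc a b))
    (hv' : ∀ x ∈ Set.Icc a b, HasDerivWithinAt v (v' x) (Set.Icc a b) x)
    (hv'' : ∀ x ∈ Set.Icc a b, HasDerivWithinAt v' (v'' x) (Set.Icc a b) x)
    (hv''cont : ContinuousOn v'' (Set.Icc a b))
    (huODE : ∀ x ∈ Set.Icc a b, u'' x + f x * u x = 0)
    (hvODE : ∀ x ∈ Set.Icc a b, v'' x + g x * v x = 0)
    (hua : u a = 0) (hub : u b = 0)
    (hconsec : ∀ x ∈ Set.Ioo a b, u x ≠ 0) :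
    ∃ x ∈ Set.Ioo a b, v x = 0 :=
  sturm_comparison_general a b hab f g hfg u u' u'' v v' v'' hu' hu'' hv' hv'' huODE hvODE hua hub
    hconsec
end

section
/- There exists a constant C > 0 such that for all Y > 0 and all ν ∈ [0, 1/2], the sum ∑_{m=1}^∞ j_{ν,m}²·e^{-j_{ν,m}²·Y} is at most (1/(C·Y^{3/2}))·e^{-C·Y}, where (j_{ν,m})_{m≥1} is the increasing sequence of positive zeros of the Bessel function J_ν. -/
/-- The Bessel function of the first kind of order `ν`, defined by its series
for positive arguments (using real powers). -/
noncomputable def besselJ (ν x : ℝ) : ℝ :=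
  ∑' m : ℕ, ((-1 : ℝ) ^ m / (m.factorial * Real.Gamma ((m : ℝ) + ν + 1))) *
    (x / 2) ^ (2 * (m : ℝ) + ν)

/-!
Write `J_ν(x) = (x/2)^ν g(x²)` with the entire series `g`. Then `u(x) = x^(ν+1/2) g(x²)` solves
`u'' = -(1 + (1/4 - ν²)/x²) u`. An alternating-series estimate gives `g > 0` on `[0, 4)`, so every
positive zero of `J_ν` is at least `2`; on `[1, ∞)` the coefficient is at most `(3/2)²`, and Sturm
comparison with a sine of frequency `> 3/2` separates consecutive zeros by at least `2π/3 > 2`.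
Hence `j_{ν,n} ≥ 2n`, so `j² e^{-j²Y} ≤ (2/(eY)) e^{-Y} e^{-n²Y}`, and comparing `∑ e^{-n²Y}`
with the Gaussian integral `√(π/Y)/2` gives the bound with `C = 1`.
-/

open Real Set
open scoped Nat

noncomputable def seriesSum (c : ℕ → ℝ) (t : ℝ) : ℝ := ∑' m, c m * t ^ m

def derivCoeff (c : ℕ → ℝ) (m : ℕ) : ℝ := (m + 1) * c (m + 1)

section FactorialBound

variable {c : ℕ → ℝ} {K : ℝ}

lemma abs_derivCoeff_le (hc : ∀ m, |c m| ≤ K / m !) (m : ℕ) :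
    |derivCoeff c m| ≤ K / m ! := by
  calc |derivCoeff c m| = (m + 1) * |c (m + 1)| := by
        rw [derivCoeff, abs_mul, abs_of_pos (by positivity)]
    _ ≤ (m + 1) * (K / (m + 1)!) := by gcongr; exact hc _
    _ = K / m ! := by rw [Nat.factorial_succ]; push_cast; field_simp

lemma summable_norm_mul_pow (hc : ∀ m, |c m| ≤ K / m !) (x : ℝ) :
    Summable fun m ↦ ‖c m * x ^ m‖ := by
  refine ((Real.summable_pow_div_factorial |x|).mul_left K).of_nonneg_of_le
    (fun _ ↦ norm_nonneg _) fun m ↦ ?_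
  rw [norm_mul, norm_pow, Real.norm_eq_abs, Real.norm_eq_abs, mul_div_assoc']
  calc |c m| * |x| ^ m ≤ K / m ! * |x| ^ m := by gcongr; exact hc m
    _ = K * |x| ^ m / m ! := by ring

lemma hasDerivAt_seriesSum (hc : ∀ m, |c m| ≤ K / m !) (x : ℝ) :
    HasDerivAt (seriesSum c) (seriesSum (derivCoeff c) x) x := by
  have hshift : seriesSum c = fun y ↦ c 0 + ∑' m, c (m + 1) * y ^ (m + 1) := by
    funext y
    rw [seriesSum, (summable_norm_mul_pow hc y).of_norm.tsum_eq_zero_add, pow_zero, mul_one]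
  have hx : x ∈ Metric.ball (0 : ℝ) (|x| + 1) := by simp
  rw [hshift, seriesSum]
  refine .const_add _ <| hasDerivAt_tsum_of_isPreconnected
    (g := fun m y ↦ c (m + 1) * y ^ (m + 1)) (g' := fun m y ↦ derivCoeff c m * y ^ m)
    ((Real.summable_pow_div_factorial (|x| + 1)).mul_left K) Metric.isOpen_ball
    (convex_ball _ _).isPreconnected (fun m y _ ↦ ?_) (fun m y hy ↦ ?_) hx
    ((summable_nat_add_iff 1).2 (summable_norm_mul_pow hc x).of_norm) hx
  · exact ((hasDerivAt_pow (m + 1) y).const_mul (c (m + 1))).congr_deriv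
      (by rw [derivCoeff]; push_cast; ring)
  · have hy : |y| ≤ |x| + 1 := by
      rw [Metric.mem_ball, dist_zero_right, Real.norm_eq_abs] at hy
      exact hy.le
    rw [norm_mul, norm_pow, Real.norm_eq_abs, Real.norm_eq_abs, mul_div_assoc']
    calc |derivCoeff c m| * |y| ^ m ≤ K / m ! * (|x| + 1) ^ m := by
          have hcm := abs_derivCoeff_le hc m
          gcongr
          exact (abs_nonneg _).trans hcm
      _ = K * (|x| + 1) ^ m / m ! := by ring

lemma hasDerivAt_seriesSum_sq (hc : ∀ m, |c m| ≤ K / m !) (x : ℝ) :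
    HasDerivAt (fun y ↦ seriesSum c (y ^ 2)) (2 * x * seriesSum (derivCoeff c) (x ^ 2)) x := by
  have h := (hasDerivAt_seriesSum hc (x ^ 2)).comp x (hasDerivAt_pow 2 x)
  exact h.congr_deriv (by push_cast; ring)

end FactorialBound

lemma Antitone.tsum_alternating_pos {d : ℕ → ℝ} (hd : Antitone d) (hs : Summable d)
    (h10 : d 1 < d 0) : 0 < ∑' m, (-1) ^ m * d m := by
  have h := hd.alternating_series_le_tendsto hs.tendsto_alternating_series_tsum 1
  simp only [mul_one, Finset.sum_range_succ, Finset.sum_range_zero] at h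
  norm_num at h
  linarith

lemma IsPreconnected.pos_or_neg_of_ne_zero {X : Type*} [TopologicalSpace X] {s : Set X}
    {f : X → ℝ} (hs : IsPreconnected s) (hf : ContinuousOn f s) (h0 : ∀ x ∈ s, f x ≠ 0) :
    (∀ x ∈ s, 0 < f x) ∨ ∀ x ∈ s, f x < 0 := by
  by_contra! ⟨⟨x, hx, hfx⟩, ⟨y, hy, hfy⟩⟩
  obtain ⟨z, hz, hfz⟩ := hs.intermediate_value hx hy hf ⟨hfx, hfy⟩
  exact h0 z hz hfz

section Sturm

variable {u u' u'' q : ℝ → ℝ} {a b k : ℝ}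

lemma pi_div_le_sub_of_pos_of_hasDerivAt (hk : 0 < k) (hab : a < b)
    (hu : ∀ x ∈ Icc a b, HasDerivAt u (u' x) x) (hu' : ∀ x ∈ Icc a b, HasDerivAt u' (u'' x) x)
    (hode : ∀ x ∈ Icc a b, u'' x = -(q x * u x)) (hq : ∀ x ∈ Icc a b, q x ≤ k ^ 2)
    (hpos : ∀ x ∈ Ioo a b, 0 < u x) (ha : u a = 0) (hb : u b = 0) : π / k ≤ b - a := by
  by_contra! hlt
  set ω := π / (b - a)
  have hωL : ω * (b - a) = π := div_mul_cancel₀ _ (sub_pos.2 hab).ne'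
  have hkω : k < ω := by
    rw [lt_div_iff₀ (sub_pos.2 hab), mul_comm]
    exact (lt_div_iff₀ hk).1 hlt
  have hv (x : ℝ) : HasDerivAt (fun x ↦ sin (ω * (x - a))) (ω * cos (ω * (x - a))) x := by
    simpa [mul_comm] using ((hasDerivAt_id x).sub_const a).const_mul ω |>.sin
  have hv' (x : ℝ) : HasDerivAt (fun x ↦ ω * cos (ω * (x - a)))
      (-(ω ^ 2 * sin (ω * (x - a)))) x := by
    simpa [mul_comm, sq, mul_assoc, mul_left_comm] using
      (((hasDerivAt_id x).sub_const a).const_mul ω |>.cos).const_mul ω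
  -- the Wronskian of `u` with `sin (ω (x - a))`, which vanishes at both ends
  set W : ℝ → ℝ := fun x ↦ u x * (ω * cos (ω * (x - a))) - u' x * sin (ω * (x - a))
  have hW (x : ℝ) (hx : x ∈ Icc a b) :
      HasDerivAt W ((q x - ω ^ 2) * u x * sin (ω * (x - a))) x := by
    refine (((hu x hx).mul (hv' x)).sub ((hu' x hx).mul (hv x))).congr_deriv ?_
    rw [hode x hx]
    ring
  have hW_anti : StrictAntiOn W (Icc a b) := by
    refine strictAntiOn_of_deriv_neg (convex_Icc a b)
      (fun x hx ↦ (hW x hx).continuousAt.continuousWithinAt) fun x hx ↦ ?_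
    rw [interior_Icc] at hx
    have hsin : 0 < sin (ω * (x - a)) := by
      refine sin_pos_of_pos_of_lt_pi (by nlinarith [hx.1]) ?_
      rw [← hωL]
      nlinarith [hx.2]
    rw [(hW x (Ioo_subset_Icc_self hx)).deriv]
    have hqω : q x - ω ^ 2 < 0 := by nlinarith [hq x (Ioo_subset_Icc_self hx)]
    exact mul_neg_of_neg_of_pos (mul_neg_of_neg_of_pos hqω (hpos x hx)) hsin
  have hWa : W a = 0 := by simp [W, ha]
  have hWb : W b = 0 := by simp [W, hb, hωL]
  exact (hW_anti (left_mem_Icc.2 hab.le) (right_mem_Icc.2 hab.le) hab).ne (hWb.trans hWa.symm)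

lemma pi_div_le_sub_of_ne_zero_of_hasDerivAt (hk : 0 < k) (hab : a < b)
    (hu : ∀ x ∈ Icc a b, HasDerivAt u (u' x) x) (hu' : ∀ x ∈ Icc a b, HasDerivAt u' (u'' x) x)
    (hode : ∀ x ∈ Icc a b, u'' x = -(q x * u x)) (hq : ∀ x ∈ Icc a b, q x ≤ k ^ 2)
    (hne : ∀ x ∈ Ioo a b, u x ≠ 0) (ha : u a = 0) (hb : u b = 0) : π / k ≤ b - a := by
  have hcont : ContinuousOn u (Ioo a b) := fun x hx ↦
    (hu x (Ioo_subset_Icc_self hx)).continuousAt.continuousWithinAt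
  rcases isPreconnected_Ioo.pos_or_neg_of_ne_zero hcont hne with hpos | hneg
  · exact pi_div_le_sub_of_pos_of_hasDerivAt hk hab hu hu' hode hq hpos ha hb
  · refine pi_div_le_sub_of_pos_of_hasDerivAt (u := -u) (u' := -u') (u'' := -u'') hk hab
      (fun x hx ↦ (hu x hx).neg) (fun x hx ↦ (hu' x hx).neg) (fun x hx ↦ ?_) hq
      (fun x hx ↦ neg_pos.2 (hneg x hx)) (by simp [ha]) (by simp [hb])
    simp [hode x hx]

end Sturm

noncomputable def besselCoeff (ν : ℝ) (m : ℕ) : ℝ := (-1) ^ m / (4 ^ m * m ! * Gamma (m + ν + 1))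

section Bessel

variable {ν : ℝ}

lemma Gamma_add_one_le_Gamma_nat_add (hν : 0 ≤ ν) (m : ℕ) :
    Gamma (ν + 1) ≤ Gamma (m + ν + 1) := by
  induction m with
  | zero => simp
  | succ m ih =>
    have hpos : 0 < (m : ℝ) + ν + 1 := by positivity
    rw [Nat.cast_succ, show (m : ℝ) + 1 + ν + 1 = (m + ν + 1) + 1 by ring,
      Gamma_add_one hpos.ne']
    nlinarith [Gamma_pos_of_pos hpos]

lemma abs_besselCoeff_le (hν : 0 ≤ ν) (m : ℕ) :
    |besselCoeff ν m| ≤ (Gamma (ν + 1))⁻¹ / m ! := by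
  have hΓ := Gamma_pos_of_pos (by positivity : 0 < ν + 1)
  have hle : 1 * m ! * Gamma (ν + 1) ≤ 4 ^ m * m ! * Gamma (m + ν + 1) := by
    gcongr
    exacts [one_le_pow₀ (by norm_num), Gamma_add_one_le_Gamma_nat_add hν m]
  rw [besselCoeff, abs_div, abs_pow, abs_neg, abs_one, one_pow, abs_of_pos (by positivity)]
  calc 1 / (4 ^ m * m ! * Gamma (m + ν + 1)) ≤ 1 / (1 * m ! * Gamma (ν + 1)) :=
        one_div_le_one_div_of_le (by positivity) hle
    _ = (Gamma (ν + 1))⁻¹ / m ! := by ring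

lemma besselCoeff_succ (hν : 0 ≤ ν) (m : ℕ) :
    4 * (m + 1) * (m + 1 + ν) * besselCoeff ν (m + 1) = -besselCoeff ν m := by
  have hpos : 0 < (m : ℝ) + ν + 1 := by positivity
  have hΓ := Gamma_pos_of_pos hpos
  rw [besselCoeff, besselCoeff, Nat.factorial_succ, Nat.cast_succ,
    show (m : ℝ) + 1 + ν + 1 = (m + ν + 1) + 1 by ring, Gamma_add_one hpos.ne']
  push_cast
  field_simp
  ring

lemma besselCoeff_mul_pow (t : ℝ) (m : ℕ) :
    besselCoeff ν m * t ^ m = (-1) ^ m * ((t / 4) ^ m / (m ! * Gamma (m + ν + 1))) := by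
  rw [besselCoeff, div_pow]
  ring

lemma seriesSum_besselCoeff_pos (hν : 0 ≤ ν) {t : ℝ} (ht0 : 0 ≤ t) (ht4 : t < 4) :
    0 < seriesSum (besselCoeff ν) t := by
  set d : ℕ → ℝ := fun m ↦ (t / 4) ^ m / (m ! * Gamma (m + ν + 1)) with hd
  have hd_nonneg (m : ℕ) : 0 ≤ d m := by positivity
  have hd_succ (m : ℕ) : d (m + 1) * ((m + 1) * (m + ν + 1)) = d m * (t / 4) := by
    have hpos : 0 < (m : ℝ) + ν + 1 := by positivity
    have hΓ := Gamma_pos_of_pos hpos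
    simp only [hd]
    rw [Nat.factorial_succ, Nat.cast_succ, show (m : ℝ) + 1 + ν + 1 = (m + ν + 1) + 1 by ring,
      Gamma_add_one hpos.ne']
    push_cast
    field_simp
    ring
  have hd_anti : Antitone d := antitone_nat_of_succ_le fun m ↦ by
    have h1 : (1 : ℝ) ≤ (m + 1) * (m + ν + 1) := by nlinarith [(m.cast_nonneg : (0 : ℝ) ≤ m)]
    nlinarith [hd_succ m, hd_nonneg m, hd_nonneg (m + 1)]
  have hd_summable : Summable d := by
    refine (summable_norm_mul_pow (abs_besselCoeff_le hν) t).congr fun m ↦ ?_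
    rw [besselCoeff_mul_pow, norm_mul, norm_pow, norm_neg, norm_one, one_pow, one_mul,
      Real.norm_eq_abs, abs_of_nonneg (hd_nonneg m)]
  have h10 : d 1 < d 0 := by
    have h0 : 0 < d 0 := by simp only [hd]; positivity
    have := hd_succ 0
    push_cast at this
    nlinarith
  rw [seriesSum, tsum_congr (besselCoeff_mul_pow t)]
  exact hd_anti.tsum_alternating_pos hd_summable h10

lemma seriesSum_besselCoeff_ode (hν : 0 ≤ ν) (t : ℝ) :
    4 * t * seriesSum (derivCoeff (derivCoeff (besselCoeff ν))) t
      + (4 * (ν + 1) * seriesSum (derivCoeff (besselCoeff ν)) t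
        + seriesSum (besselCoeff ν) t) = 0 := by
  set c := besselCoeff ν
  have hc := abs_besselCoeff_le hν
  set b : ℕ → ℝ := fun m ↦ 4 * (ν + 1) * derivCoeff c m + c m with hb
  have h1 := (summable_norm_mul_pow (abs_derivCoeff_le hc) t).of_norm.mul_left (4 * (ν + 1))
  have h0 := (summable_norm_mul_pow hc t).of_norm
  have hbs : Summable fun m ↦ b m * t ^ m := (h1.add h0).congr fun m ↦ by ring
  have hB : 4 * (ν + 1) * seriesSum (derivCoeff c) t + seriesSum c t
      = b 0 + ∑' m, b (m + 1) * t ^ (m + 1) := by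
    calc 4 * (ν + 1) * seriesSum (derivCoeff c) t + seriesSum c t = ∑' m, b m * t ^ m := by
          rw [seriesSum, seriesSum, ← tsum_mul_left, ← h1.tsum_add h0]
          exact tsum_congr fun m ↦ by ring
      _ = b 0 + ∑' m, b (m + 1) * t ^ (m + 1) := by
          simpa using hbs.tsum_eq_zero_add
  -- `4 t g''` lines up with the series of `4 (ν + 1) g' + g` shifted by one index
  have hA : 4 * t * seriesSum (derivCoeff (derivCoeff c)) t
      = ∑' m, 4 * derivCoeff (derivCoeff c) m * t ^ (m + 1) := by
    rw [seriesSum, ← tsum_mul_left]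
    exact tsum_congr fun m ↦ by ring
  have hb0 : b 0 = 0 := by
    have := besselCoeff_succ hν 0
    simp only [hb, derivCoeff, c]
    push_cast at this ⊢
    linear_combination this
  have hcoeff (m : ℕ) : 4 * derivCoeff (derivCoeff c) m + b (m + 1) = 0 := by
    have := besselCoeff_succ hν (m + 1)
    simp only [hb, derivCoeff, c]
    push_cast at this ⊢
    linear_combination this
  rw [hA, hB, hb0, zero_add, ← Summable.tsum_add]
  · simp only [← add_mul, hcoeff, zero_mul, tsum_zero]
  · exact ((summable_norm_mul_pow (abs_derivCoeff_le (abs_derivCoeff_le hc)) t).of_norm.mul_left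
      (4 * t)).congr fun m ↦ by ring
  · exact (summable_nat_add_iff 1).2 hbs

lemma two_le_sub_of_seriesSum_besselCoeff_eq_zero (hν : 0 ≤ ν) {a b : ℝ} (ha : 1 ≤ a)
    (hab : a < b) (hza : seriesSum (besselCoeff ν) (a ^ 2) = 0)
    (hzb : seriesSum (besselCoeff ν) (b ^ 2) = 0)
    (hne : ∀ x ∈ Ioo a b, seriesSum (besselCoeff ν) (x ^ 2) ≠ 0) : 2 ≤ b - a := by
  set g := seriesSum (besselCoeff ν)
  set g' := seriesSum (derivCoeff (besselCoeff ν))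
  set g'' := seriesSum (derivCoeff (derivCoeff (besselCoeff ν)))
  have hc := abs_besselCoeff_le hν
  have hG (x : ℝ) : HasDerivAt (fun x ↦ g (x ^ 2)) (2 * x * g' (x ^ 2)) x :=
    hasDerivAt_seriesSum_sq hc x
  have hG' (x : ℝ) :
      HasDerivAt (fun x ↦ 2 * x * g' (x ^ 2)) (2 * g' (x ^ 2) + 4 * x ^ 2 * g'' (x ^ 2)) x := by
    have h := ((hasDerivAt_id x).const_mul 2).mul (hasDerivAt_seriesSum_sq (abs_derivCoeff_le hc) x)
    exact h.congr_deriv (by simp only [id]; ring)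
  have hxpos (x : ℝ) (hx : x ∈ Icc a b) : 0 < x := by linarith [hx.1]
  set p := ν + 1 / 2 with hp
  have hw (x : ℝ) (hx : x ∈ Icc a b) : HasDerivAt (· ^ p) (p * x ^ (p - 1)) x :=
    hasDerivAt_rpow_const (Or.inl (hxpos x hx).ne')
  have hw' (x : ℝ) (hx : x ∈ Icc a b) :
      HasDerivAt (fun x ↦ p * x ^ (p - 1)) (p * ((p - 1) * x ^ (p - 1 - 1))) x :=
    (hasDerivAt_rpow_const (Or.inl (hxpos x hx).ne')).const_mul p
  have hode (x : ℝ) (hx : x ∈ Icc a b) :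
      p * ((p - 1) * x ^ (p - 1 - 1)) * g (x ^ 2) + p * x ^ (p - 1) * (2 * x * g' (x ^ 2))
        + (p * x ^ (p - 1) * (2 * x * g' (x ^ 2))
          + x ^ p * (2 * g' (x ^ 2) + 4 * x ^ 2 * g'' (x ^ 2)))
        = -((1 + (1 / 4 - ν ^ 2) / x ^ 2) * (x ^ p * g (x ^ 2))) := by
    have hx := hxpos x hx
    rw [rpow_sub_one hx.ne', rpow_sub_one hx.ne', hp]
    linear_combination x ^ (ν + 1 / 2) * seriesSum_besselCoeff_ode hν (x ^ 2)
      + 4 * (ν + 1 / 2) * x ^ (ν + 1 / 2) * g' (x ^ 2) * mul_inv_cancel₀ hx.ne'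
  have hgap := pi_div_le_sub_of_ne_zero_of_hasDerivAt (k := 3 / 2)
    (u := fun x ↦ x ^ p * g (x ^ 2)) (q := fun x ↦ 1 + (1 / 4 - ν ^ 2) / x ^ 2) (by norm_num) hab
    (fun x hx ↦ (hw x hx).mul (hG x))
    (fun x hx ↦ ((hw' x hx).mul (hG x)).add ((hw x hx).mul (hG' x))) hode (fun x hx ↦ ?_)
    (fun x hx ↦ mul_ne_zero (rpow_pos_of_pos (hxpos x (Ioo_subset_Icc_self hx)) _).ne' (hne x hx))
    (by simp [hza]) (by simp [hzb])
  · linarith [pi_gt_three]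
  · have hx2 : 1 ≤ x ^ 2 := by nlinarith [hx.1]
    have : (1 / 4 - ν ^ 2) / x ^ 2 ≤ 1 / 4 := by
      rw [div_le_iff₀ (by positivity)]
      nlinarith
    norm_num
    linarith

lemma two_le_of_seriesSum_besselCoeff_eq_zero {x : ℝ} (hν : 0 ≤ ν) (hx : 0 < x)
    (h : seriesSum (besselCoeff ν) (x ^ 2) = 0) : 2 ≤ x := by
  by_contra! hx2
  exact (seriesSum_besselCoeff_pos hν (sq_nonneg x) (by nlinarith)).ne' h

lemma besselJ_eq_rpow_mul_seriesSum {x : ℝ} (hx : 0 < x) :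
    besselJ ν x = (x / 2) ^ ν * seriesSum (besselCoeff ν) (x ^ 2) := by
  rw [besselJ, seriesSum, ← tsum_mul_left]
  refine tsum_congr fun m ↦ ?_
  have hpow : (x / 2) ^ (2 * (m : ℝ)) = (x ^ 2) ^ m / 4 ^ m := by
    rw [← Nat.cast_ofNat, ← Nat.cast_mul, rpow_natCast, div_pow, pow_mul, pow_mul]
    norm_num
  rw [rpow_add (by positivity), hpow, besselCoeff]
  ring

lemma besselJ_eq_zero_iff {x : ℝ} (hx : 0 < x) :
    besselJ ν x = 0 ↔ seriesSum (besselCoeff ν) (x ^ 2) = 0 := by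
  rw [besselJ_eq_rpow_mul_seriesSum hx, mul_eq_zero,
    or_iff_right (rpow_pos_of_pos (by positivity) _).ne']

end Bessel

lemma StrictMonoOn.apply_notMem_Ioo_succ {α : Type*} [LinearOrder α] {j : ℕ → α} {s : Set ℕ}
    (hj : StrictMonoOn j s) {n k : ℕ} (hn : n ∈ s) (hn1 : n + 1 ∈ s) (hk : k ∈ s) :
    j k ∉ Ioo (j n) (j (n + 1)) := fun ⟨h1, h2⟩ ↦ by
  have := (hj.lt_iff_lt hn hk).1 h1
  have := (hj.lt_iff_lt hk hn1).1 h2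
  omega

lemma mul_succ_le_of_add_le_succ {s : ℕ → ℝ} {d : ℝ} (h0 : d ≤ s 0)
    (hs : ∀ m, s m + d ≤ s (m + 1)) (m : ℕ) : d * (m + 1) ≤ s m := by
  induction m with
  | zero => simpa using h0
  | succ m ih => push_cast; linarith [hs m]

lemma sum_range_exp_neg_mul_sq_le {Y : ℝ} (hY : 0 < Y) (N : ℕ) :
    ∑ n ∈ Finset.range N, exp (-Y * ((n : ℝ) + 1) ^ 2) ≤ √(π / Y) / 2 := by
  have hanti : AntitoneOn (fun x : ℝ ↦ exp (-Y * x ^ 2)) (Icc 0 (0 + N)) := fun x hx y _ hxy ↦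
    exp_le_exp.2 (by nlinarith [mul_le_mul hxy hxy hx.1 (hx.1.trans hxy)])
  calc ∑ n ∈ Finset.range N, exp (-Y * ((n : ℝ) + 1) ^ 2)
      ≤ ∫ x in (0 : ℝ)..0 + N, exp (-Y * x ^ 2) := by simpa using hanti.sum_le_integral
    _ ≤ ∫ x in Ioi (0 : ℝ), exp (-Y * x ^ 2) := by
      rw [zero_add, intervalIntegral.integral_of_le N.cast_nonneg]
      exact MeasureTheory.setIntegral_mono_set (integrable_exp_neg_mul_sq hY).integrableOn
        (.of_forall fun _ ↦ (exp_pos _).le) Ioc_subset_Ioi_self.eventuallyLE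
    _ = √(π / Y) / 2 := integral_gaussian_Ioi Y

lemma sq_mul_exp_neg_sq_mul_le {Y s n : ℝ} (hY : 0 < Y) (hn : 1 ≤ n) (hs : 2 * n ≤ s) :
    s ^ 2 * exp (-s ^ 2 * Y) ≤ 2 * exp (-1) / Y * exp (-Y) * exp (-Y * n ^ 2) := by
  have hsplit : exp (-s ^ 2 * Y) = exp (-(s ^ 2 * Y / 2)) * exp (-(s ^ 2 * Y / 2)) := by
    rw [← exp_add]
    ring_nf
  have hdecay : exp (-(s ^ 2 * Y / 2)) ≤ exp (-Y) * exp (-Y * n ^ 2) := by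
    rw [← exp_add]
    have h4 : 4 * n ^ 2 ≤ s ^ 2 := by nlinarith
    have h1 : 1 ≤ n ^ 2 := by nlinarith
    gcongr
    nlinarith [mul_le_mul_of_nonneg_right h4 hY.le, mul_le_mul_of_nonneg_right h1 hY.le]
  calc s ^ 2 * exp (-s ^ 2 * Y)
      = 2 / Y * (s ^ 2 * Y / 2 * exp (-(s ^ 2 * Y / 2))) * exp (-(s ^ 2 * Y / 2)) := by
        rw [hsplit]
        field_simp
    _ ≤ 2 / Y * exp (-1) * (exp (-Y) * exp (-Y * n ^ 2)) := by
        gcongr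
        exact mul_exp_neg_le_exp_neg_one _
    _ = 2 * exp (-1) / Y * exp (-Y) * exp (-Y * n ^ 2) := by ring

lemma tsum_sq_mul_exp_neg_sq_mul_le {Y : ℝ} (hY : 0 < Y) {s : ℕ → ℝ}
    (hs : ∀ m : ℕ, 2 * ((m : ℝ) + 1) ≤ s m) :
    ∑' m, s m ^ 2 * exp (-s m ^ 2 * Y) ≤ exp (-Y) / Y ^ (3 / 2 : ℝ) := by
  have hY32 : Y ^ (3 / 2 : ℝ) = Y * √Y := by
    rw [show (3 / 2 : ℝ) = 1 + 1 / 2 by norm_num, rpow_add hY, rpow_one, sqrt_eq_rpow]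
  have hconst : exp (-1) * √π ≤ 1 := by
    have hπ : √π < 2 := (sqrt_lt' two_pos).2 (by linarith [pi_lt_four])
    nlinarith [exp_neg_one_lt_half, exp_pos (-1), sqrt_nonneg π]
  refine tsum_le_of_sum_range_le (fun m ↦ by positivity) fun N ↦ ?_
  calc ∑ m ∈ Finset.range N, s m ^ 2 * exp (-s m ^ 2 * Y)
      ≤ ∑ m ∈ Finset.range N, 2 * exp (-1) / Y * exp (-Y) * exp (-Y * ((m : ℝ) + 1) ^ 2) :=
        Finset.sum_le_sum fun m _ ↦
          sq_mul_exp_neg_sq_mul_le hY (by linarith [m.cast_nonneg (α := ℝ)]) (hs m)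
    _ ≤ 2 * exp (-1) / Y * exp (-Y) * (√(π / Y) / 2) := by
        rw [← Finset.mul_sum]
        gcongr
        exact sum_range_exp_neg_mul_sq_le hY N
    _ = exp (-1) * √π * (exp (-Y) / Y ^ (3 / 2 : ℝ)) := by
        rw [hY32, sqrt_div' _ hY.le]
        field_simp
    _ ≤ exp (-Y) / Y ^ (3 / 2 : ℝ) := mul_le_of_le_one_left (by positivity) hconst

theorem bessel_zeros_series_bound :
    ∃ C > 0, ∀ Y > (0:ℝ), ∀ ν ∈ Set.Icc (0:ℝ) (1 / 2), ∀ j : ℕ → ℝ,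
      (∀ n, 1 ≤ n → 0 < j n) →
      StrictMonoOn j (Set.Ici 1) →
      (∀ n, 1 ≤ n → besselJ ν (j n) = 0) →
      (∀ x, 0 < x → besselJ ν x = 0 → ∃ n, 1 ≤ n ∧ j n = x) →
      ∑' m : ℕ, (j (m + 1)) ^ 2 * Real.exp (-(j (m + 1)) ^ 2 * Y)
        ≤ 1 / (C * Y ^ ((3 : ℝ) / 2)) * Real.exp (-C * Y) := by
  refine ⟨1, one_pos, fun Y hY ν hν j hj_pos hj_mono hj_zero hj_all ↦ ?_⟩
  have hzero (n : ℕ) (hn : 1 ≤ n) : seriesSum (besselCoeff ν) (j n ^ 2) = 0 :=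
    (besselJ_eq_zero_iff (hj_pos n hn)).1 (hj_zero n hn)
  have hge_two (n : ℕ) (hn : 1 ≤ n) : 2 ≤ j n :=
    two_le_of_seriesSum_besselCoeff_eq_zero hν.1 (hj_pos n hn) (hzero n hn)
  have hgap (n : ℕ) (hn : 1 ≤ n) : j n + 2 ≤ j (n + 1) := by
    have hn1 : n + 1 ∈ Ici 1 := Nat.le_succ_of_le hn
    have hne (x : ℝ) (hx : x ∈ Ioo (j n) (j (n + 1))) :
        seriesSum (besselCoeff ν) (x ^ 2) ≠ 0 := by
      intro hx0
      have hxpos : 0 < x := (hj_pos n hn).trans hx.1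
      obtain ⟨k, hk, rfl⟩ := hj_all x hxpos ((besselJ_eq_zero_iff hxpos).2 hx0)
      exact hj_mono.apply_notMem_Ioo_succ hn hn1 hk hx
    have := two_le_sub_of_seriesSum_besselCoeff_eq_zero hν.1 (by linarith [hge_two n hn])
      (hj_mono hn hn1 n.lt_succ_self) (hzero n hn) (hzero (n + 1) hn1) hne
    linarith
  have hlower := mul_succ_le_of_add_le_succ (s := fun m ↦ j (m + 1)) (hge_two 1 le_rfl)
    fun m ↦ hgap (m + 1) m.succ_pos
  refine (tsum_sq_mul_exp_neg_sq_mul_le hY hlower).trans_eq ?_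
  rw [one_mul, neg_one_mul, one_div, inv_mul_eq_div]
end

section
/- Let α ∈ [4/3, 2), ν = (α-1)/(2-α), κ = (2-α)/2, and let λ_n = κ²·j_{ν,n}² for n ≥ 1. Assume (i) the sequence (j_{ν,n+1} - j_{ν,n})_{n≥1} is nonincreasing, (ii) j_{ν,n} ≤ π(n + ν/2 - 1/4) for all n, and (iii) j_{ν,2} - j_{ν,1} ≤ C·ν^{1/3} for a constant C independent of α. Then there is a constant C' independent of α and n such that λ_{n+1} - λ_n ≤ C'·(κ^{2/3} + κ^{5/3}·n) for all n ≥ 1; in particular for each fixed n, λ_{n+1} - λ_n → 0 as α → 2⁻. -/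
open Filter

private lemma aux_final (p C a b m : ℝ) (hp : 0 < p) (hC : 0 < C)
    (ha : 0 ≤ a) (hb : 0 ≤ b) (hab : a ≤ b) (hm : 0 ≤ m) :
    2 * p * C * (a * (m + 1) + b / 2) ≤ (4 * p * C + 1) * (b + a * m) := by
  nlinarith [mul_le_mul_of_nonneg_left hab (show (0:ℝ) ≤ 2 * p * C by positivity),
    mul_nonneg (show (0:ℝ) ≤ p * C by positivity) (mul_nonneg ha hm),
    mul_nonneg (show (0:ℝ) ≤ p * C by positivity) hb,
    mul_nonneg ha hm, hb]


theorem eigenvalue_concentration :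
    ∀ C > (0:ℝ), ∃ C' > (0:ℝ), ∀ j : ℝ → ℕ → ℝ,
      (∀ α ∈ Set.Ico ((4:ℝ)/3) 2,
        (∀ n, 1 ≤ n → 0 < j α n) ∧
        (∀ n, 1 ≤ n → j α n ≤ j α (n + 1)) ∧
        (∀ n, 1 ≤ n → j α (n + 2) - j α (n + 1) ≤ j α (n + 1) - j α n) ∧
        (∀ n, 1 ≤ n → j α n ≤ Real.pi * ((n : ℝ) + ((α - 1) / (2 - α)) / 2 - 1 / 4)) ∧
        j α 2 - j α 1 ≤ C * ((α - 1) / (2 - α)) ^ ((1:ℝ)/3)) →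
      (∀ α ∈ Set.Ico ((4:ℝ)/3) 2, ∀ n, 1 ≤ n →
          ((2 - α) / 2) ^ 2 * (j α (n + 1)) ^ 2 - ((2 - α) / 2) ^ 2 * (j α n) ^ 2
            ≤ C' * (((2 - α) / 2) ^ ((2:ℝ)/3) + ((2 - α) / 2) ^ ((5:ℝ)/3) * n)) ∧
        (∀ n, 1 ≤ n →
          Tendsto
            (fun α : ℝ =>
              ((2 - α) / 2) ^ 2 * (j α (n + 1)) ^ 2 - ((2 - α) / 2) ^ 2 * (j α n) ^ 2)
            (nhdsWithin 2 (Set.Ico ((4:ℝ)/3) 2)) (nhds 0)) := by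
  intro C hC
  refine ⟨4 * Real.pi * C + 1, by positivity, ?_⟩
  intro j hj
  have key : ∀ α ∈ Set.Ico ((4:ℝ)/3) 2, ∀ n, 1 ≤ n →
      ((2 - α) / 2) ^ 2 * (j α (n + 1)) ^ 2 - ((2 - α) / 2) ^ 2 * (j α n) ^ 2
        ≤ (4 * Real.pi * C + 1) *
          (((2 - α) / 2) ^ ((2:ℝ)/3) + ((2 - α) / 2) ^ ((5:ℝ)/3) * n) := by
    intro α hα n hn
    obtain ⟨hpos, hmono, hgm, hup, hC1⟩ := hj α hα
    obtain ⟨hα1, hα2⟩ := hα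
    set κ : ℝ := (2 - α) / 2 with hκdef
    set ν : ℝ := (α - 1) / (2 - α) with hνdef
    have h2α : 0 < 2 - α := by linarith
    have hκpos : 0 < κ := by rw [hκdef]; linarith
    have hκ1 : κ ≤ 1 := by rw [hκdef]; linarith
    have hνpos : 0 < ν := by
      rw [hνdef]; apply div_pos <;> linarith
    have hνκ : ν ≤ κ⁻¹ := by
      rw [hνdef, hκdef]
      rw [div_le_iff₀ h2α] at *
      have : ((2 - α) / 2)⁻¹ = 2 / (2 - α) := by
        rw [inv_div]
      rw [this, div_mul_eq_mul_div, le_div_iff₀ h2α]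
      nlinarith
    have gapmono' : ∀ m, 1 ≤ m → j α (m + 1) - j α m ≤ j α 2 - j α 1 := by
      intro m hm
      induction m with
      | zero => omega
      | succ k ih =>
        rcases Nat.lt_or_ge 1 (k+1) with h | h
        · have hk : 1 ≤ k := by omega
          calc j α (k + 1 + 1) - j α (k + 1) ≤ j α (k + 1) - j α k := hgm k hk
            _ ≤ j α 2 - j α 1 := ih hk
        · have : k = 0 := by omega
          subst this; norm_num
    have hD : j α (n + 1) - j α n ≤ C * ν ^ ((1:ℝ)/3) :=
      le_trans (gapmono' n hn) hC1
    have hS : j α (n + 1) + j α n ≤ 2 * Real.pi * ((n : ℝ) + 1 + ν / 2) := by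
      have h1 := hup n hn
      have h2 := hup (n + 1) (by omega)
      push_cast at h2
      nlinarith [Real.pi_pos]
    have hSnn : 0 ≤ j α (n + 1) + j α n := by
      have := hpos n hn
      have := hpos (n + 1) (show 1 ≤ n + 1 by omega)
      linarith
    have hXpos : (0:ℝ) < ν ^ ((1:ℝ)/3) := Real.rpow_pos_of_pos hνpos _
    -- main rpow estimates
    have e1 : κ ^ 2 * ν ^ ((1:ℝ)/3) ≤ κ ^ ((5:ℝ)/3) := by
      have hr : ν ^ ((1:ℝ)/3) ≤ (κ⁻¹) ^ ((1:ℝ)/3) :=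
        Real.rpow_le_rpow hνpos.le hνκ (by norm_num)
      have hinv : (κ⁻¹) ^ ((1:ℝ)/3) = κ ^ (-(1:ℝ)/3) := by
        rw [← Real.rpow_neg_one, ← Real.rpow_mul hκpos.le]
        norm_num
      have : κ ^ 2 * ν ^ ((1:ℝ)/3) ≤ κ ^ 2 * κ ^ (-(1:ℝ)/3) := by
        rw [← hinv]
        exact mul_le_mul_of_nonneg_left hr (by positivity)
      refine this.trans_eq ?_
      rw [← Real.rpow_natCast κ 2, ← Real.rpow_add hκpos]
      norm_num
    have e2 : κ ^ ((5:ℝ)/3) * ν ≤ κ ^ ((2:ℝ)/3) := by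
      have : κ ^ ((5:ℝ)/3) * ν ≤ κ ^ ((5:ℝ)/3) * κ⁻¹ :=
        mul_le_mul_of_nonneg_left hνκ (by positivity)
      refine this.trans_eq ?_
      rw [← Real.rpow_neg_one, ← Real.rpow_add hκpos]
      norm_num
    have e3 : κ ^ ((5:ℝ)/3) ≤ κ ^ ((2:ℝ)/3) :=
      Real.rpow_le_rpow_of_exponent_ge hκpos hκ1 (by norm_num)
    have hb : (0:ℝ) ≤ κ ^ ((2:ℝ)/3) := by positivity
    have ha : (0:ℝ) ≤ κ ^ ((5:ℝ)/3) := by positivity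
    have hnn : (1:ℝ) ≤ (n:ℝ) := by exact_mod_cast hn
    have expand : κ ^ 2 * (j α (n + 1)) ^ 2 - κ ^ 2 * (j α n) ^ 2
        = κ ^ 2 * (j α (n + 1) - j α n) * (j α (n + 1) + j α n) := by ring
    rw [expand]
    have step1 : κ ^ 2 * (j α (n + 1) - j α n) * (j α (n + 1) + j α n)
        ≤ κ ^ 2 * (C * ν ^ ((1:ℝ)/3)) * (j α (n + 1) + j α n) :=
      mul_le_mul_of_nonneg_right
        (mul_le_mul_of_nonneg_left hD (by positivity)) hSnn
    have step2 : κ ^ 2 * (C * ν ^ ((1:ℝ)/3)) * (j α (n + 1) + j α n)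
        ≤ κ ^ 2 * (C * ν ^ ((1:ℝ)/3)) * (2 * Real.pi * ((n : ℝ) + 1 + ν / 2)) :=
      mul_le_mul_of_nonneg_left hS (by positivity)
    refine (step1.trans step2).trans ?_
    -- now pure algebra with e1, e2, e3
    have key2 : κ ^ 2 * (C * ν ^ ((1:ℝ)/3)) * (2 * Real.pi * ((n : ℝ) + 1 + ν / 2))
        = 2 * Real.pi * C * ((κ ^ 2 * ν ^ ((1:ℝ)/3)) * ((n:ℝ) + 1)
          + (κ ^ 2 * ν ^ ((1:ℝ)/3)) * ν / 2) := by ring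
    rw [key2]
    have f1 : (κ ^ 2 * ν ^ ((1:ℝ)/3)) * ((n:ℝ) + 1) ≤ κ ^ ((5:ℝ)/3) * ((n:ℝ) + 1) :=
      mul_le_mul_of_nonneg_right e1 (by linarith)
    have f2 : (κ ^ 2 * ν ^ ((1:ℝ)/3)) * ν ≤ κ ^ ((2:ℝ)/3) := by
      calc (κ ^ 2 * ν ^ ((1:ℝ)/3)) * ν ≤ κ ^ ((5:ℝ)/3) * ν :=
            mul_le_mul_of_nonneg_right e1 hνpos.le
        _ ≤ κ ^ ((2:ℝ)/3) := e2
    have hpi := Real.pi_pos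
    have g1 : 2 * Real.pi * C * ((κ ^ 2 * ν ^ ((1:ℝ)/3)) * ((n:ℝ) + 1)
          + (κ ^ 2 * ν ^ ((1:ℝ)/3)) * ν / 2)
        ≤ 2 * Real.pi * C * (κ ^ ((5:ℝ)/3) * ((n:ℝ) + 1) + κ ^ ((2:ℝ)/3) / 2) :=
      mul_le_mul_of_nonneg_left (by linarith) (by positivity)
    refine g1.trans ?_
    exact aux_final Real.pi C (κ ^ ((5:ℝ)/3)) (κ ^ ((2:ℝ)/3)) (n:ℝ)
      Real.pi_pos hC ha hb e3 (by positivity)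
  refine ⟨key, ?_⟩
  intro n hn
  have hk : Tendsto (fun α : ℝ => (2 - α) / 2) (nhdsWithin 2 (Set.Ico ((4:ℝ)/3) 2))
      (nhds 0) := by
    have hc : Tendsto (fun α : ℝ => (2 - α) / 2) (nhds 2) (nhds ((2 - 2) / 2)) :=
      (Continuous.div_const (continuous_const.sub continuous_id) 2).tendsto 2
    simpa using hc.mono_left nhdsWithin_le_nhds
  have h23 : Tendsto (fun x : ℝ => x ^ ((2:ℝ)/3)) (nhds 0) (nhds 0) := by
    have := (Real.continuousAt_rpow_const 0 (2/3) (Or.inr (by norm_num))).tendsto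
    simpa [Real.zero_rpow (by norm_num : (2:ℝ)/3 ≠ 0)] using this
  have h53 : Tendsto (fun x : ℝ => x ^ ((5:ℝ)/3)) (nhds 0) (nhds 0) := by
    have := (Real.continuousAt_rpow_const 0 (5/3) (Or.inr (by norm_num))).tendsto
    simpa [Real.zero_rpow (by norm_num : (5:ℝ)/3 ≠ 0)] using this
  have hg : Tendsto (fun α : ℝ => (4 * Real.pi * C + 1) *
      (((2 - α) / 2) ^ ((2:ℝ)/3) + ((2 - α) / 2) ^ ((5:ℝ)/3) * n))
      (nhdsWithin 2 (Set.Ico ((4:ℝ)/3) 2)) (nhds 0) := by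
    have := (((h23.comp hk).add ((h53.comp hk).mul_const (n:ℝ))).const_mul
      (4 * Real.pi * C + 1))
    simpa using this
  refine squeeze_zero' ?_ ?_ hg
  · filter_upwards [self_mem_nhdsWithin] with α hα
    obtain ⟨hpos, hmono, -, -, -⟩ := hj α hα
    have h1 : 0 < j α n := hpos n hn
    have h2 : j α n ≤ j α (n + 1) := hmono n hn
    have : (j α n) ^ 2 ≤ (j α (n + 1)) ^ 2 := by nlinarith
    nlinarith [sq_nonneg ((2 - α) / 2)]
  · filter_upwards [self_mem_nhdsWithin] with α hα
    exact key α hα n hn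
end
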